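/- arXiv:1803.09155 — 3 statements merged into one kernel-verified Lean document; each statement's English description precedes it below -/
import Mathlib

section
/- As N → ∞, the sum of Euler's totient function up to N satisfies ∑_{n=1}^{N} φ(n) = (1 + o(1)) · (3/π²) · N²; equivalently, the limit of (∑_{n=1}^{N} φ(n)) / N² as N → ∞ equals 3/π². -/
/-!
Möbius inversion of `∑_{d ∣ n} φ(d) = n` gives `φ = μ * id`, so summing over `n ≤ N` and
exchanging the order of summation,
`∑_{n ≤ N} φ(n) = ∑_{d ≤ N} μ(d) · T(⌊N/d⌋)` with `T(M) = M(M+1)/2`.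
After dividing by `N²` the `d`-th term tends to `μ(d)/(2d²)` and is bounded by `1/d²`, so by
dominated convergence for series the limit is `(1/2) ∑ μ(d)/d² = (1/2) · 1/ζ(2) = 3/π²`.
-/

open Filter Finset Real Topology
open ArithmeticFunction ArithmeticFunction.Moebius LSeries.notation

theorem Nat.totient_eq_sum_moebius_mul {R : Type*} [NonAssocRing R] {n : ℕ} (hn : 0 < n) :
    (n.totient : R) = ∑ x ∈ n.divisorsAntidiagonal, (μ x.1 : R) * x.2 :=
  (sum_eq_iff_sum_mul_moebius_eq (f := fun n ↦ (n.totient : R)) (g := (↑)).mp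
    (fun n _ ↦ by rw [← Nat.cast_sum, Nat.sum_totient]) n hn).symm

theorem sum_Icc_totient_eq_sum_moebius_mul {R : Type*} [Ring R] (N : ℕ) :
    ∑ n ∈ Icc 1 N, (n.totient : R) = ∑ d ∈ Ioc 0 N, (μ d : R) * ∑ m ∈ Ioc 0 (N / d), (m : R) := by
  have h := sum_Ioc_mul_eq_sum_sum (μ : ArithmeticFunction R)
    (ArithmeticFunction.id : ArithmeticFunction R) N
  simp only [intCoe_apply, natCoe_apply, id_apply] at h
  rw [← h, ← Icc_add_one_left_eq_Ioc]
  refine sum_congr rfl fun n hn ↦ ?_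
  rw [mul_apply, Nat.totient_eq_sum_moebius_mul (by simp at hn; omega)]
  simp [intCoe_apply, natCoe_apply]

theorem tsum_moebius_div_sq : ∑' n : ℕ, (μ n : ℝ) / n ^ 2 = 6 / π ^ 2 := by
  have hL : L ↗μ 2 = 6 / (π : ℂ) ^ 2 := by
    have h := LSeries_zeta_mul_Lseries_moebius (s := 2) (by norm_num)
    rw [LSeries_zeta_eq_riemannZeta (by norm_num), riemannZeta_two] at h
    rw [eq_div_iff (by simp [pi_ne_zero])]
    linear_combination 6 * h
  have hterm : ∀ n : ℕ, LSeries.term ↗μ 2 n = (((μ n : ℝ) / n ^ 2 : ℝ) : ℂ) := by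
    intro n
    rcases eq_or_ne n 0 with rfl | hn
    · simp
    · rw [LSeries.term_of_ne_zero hn, ← Nat.cast_ofNat, Complex.cpow_natCast]
      push_cast
      rfl
  rw [LSeries, funext hterm, ← Complex.ofReal_tsum] at hL
  exact_mod_cast hL

theorem sum_Ioc_natCast_eq {K : Type*} [Field K] [CharZero K] (M : ℕ) :
    ∑ m ∈ Ioc 0 M, (m : K) = M * (M + 1) / 2 := by
  induction M with
  | zero => simp
  | succ M ih =>
    rw [sum_Ioc_succ_top M.zero_le, ih]
    push_cast
    ring

theorem tendsto_natCast_div_div_self {d : ℕ} (hd : d ≠ 0) :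
    Tendsto (fun N : ℕ ↦ ((N / d : ℕ) : ℝ) / N) atTop (𝓝 (d : ℝ)⁻¹) := by
  refine ((tendsto_nat_floor_mul_div_atTop (a := (d : ℝ)⁻¹) (by positivity)).comp
    tendsto_natCast_atTop_atTop).congr fun N ↦ ?_
  simp [inv_mul_eq_div, Nat.floor_div_eq_div]

theorem tendsto_sum_Ioc_div_div_sq (d : ℕ) :
    Tendsto (fun N : ℕ ↦ (∑ m ∈ Ioc 0 (N / d), (m : ℝ)) / N ^ 2) atTop
      (𝓝 (((d : ℝ) ^ 2)⁻¹ / 2)) := by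
  rcases eq_or_ne d 0 with rfl | hd
  · simp
  have hx := tendsto_natCast_div_div_self hd
  have h := (hx.pow 2).add (hx.mul (tendsto_inv_atTop_zero.comp tendsto_natCast_atTop_atTop))
  rw [mul_zero, add_zero, inv_pow] at h
  refine (h.div_const 2).congr' ?_
  filter_upwards [eventually_ne_atTop 0] with N hN
  rw [sum_Ioc_natCast_eq]
  simp only [Function.comp_apply]
  field_simp

theorem sum_Ioc_div_div_sq_le (N d : ℕ) :
    (∑ m ∈ Ioc 0 (N / d), (m : ℝ)) / N ^ 2 ≤ ((d : ℝ) ^ 2)⁻¹ := by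
  rcases eq_or_ne N 0 with rfl | hN
  · simp
  have hsum : ∑ m ∈ Ioc 0 (N / d), (m : ℝ) ≤ ((N / d : ℕ) : ℝ) ^ 2 :=
    calc ∑ m ∈ Ioc 0 (N / d), (m : ℝ) ≤ ∑ _m ∈ Ioc 0 (N / d), ((N / d : ℕ) : ℝ) :=
          sum_le_sum fun m hm ↦ by simp only [mem_Ioc] at hm; exact_mod_cast hm.2
      _ = ((N / d : ℕ) : ℝ) ^ 2 := by simp [sq]
  calc (∑ m ∈ Ioc 0 (N / d), (m : ℝ)) / N ^ 2 ≤ ((N : ℝ) / d) ^ 2 / N ^ 2 := by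
        gcongr
        exact hsum.trans (by gcongr; exact Nat.cast_div_le)
    _ = ((d : ℝ) ^ 2)⁻¹ := by field_simp

theorem tendsto_sum_mul_sum_Ioc_div_sq {a : ℕ → ℝ} {C : ℝ} (ha : ∀ d, |a d| ≤ C) :
    Tendsto (fun N : ℕ ↦ (∑ d ∈ Ioc 0 N, a d * ∑ m ∈ Ioc 0 (N / d), (m : ℝ)) / N ^ 2) atTop
      (𝓝 ((∑' d : ℕ, a d / d ^ 2) / 2)) := by
  set F : ℕ → ℕ → ℝ := fun N d ↦ a d * ((∑ m ∈ Ioc 0 (N / d), (m : ℝ)) / N ^ 2)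
  have hF : ∀ N, ∑' d, F N d = (∑ d ∈ Ioc 0 N, a d * ∑ m ∈ Ioc 0 (N / d), (m : ℝ)) / N ^ 2 := by
    intro N
    rw [tsum_eq_sum (s := Ioc 0 N), sum_div]
    · simp only [F, mul_div_assoc]
    · intro d hd
      have hNd : N / d = 0 := Nat.div_eq_zero_iff.mpr (by simp only [mem_Ioc] at hd; omega)
      simp [F, hNd]
  have hlim : Tendsto (fun N ↦ ∑' d, F N d) atTop (𝓝 (∑' d : ℕ, a d * (((d : ℝ) ^ 2)⁻¹ / 2))) :=
    tendsto_tsum_of_dominated_convergence (bound := fun d ↦ C * ((d : ℝ) ^ 2)⁻¹)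
      ((Real.summable_nat_pow_inv.mpr one_lt_two).mul_left C)
      (fun d ↦ (tendsto_sum_Ioc_div_div_sq d).const_mul (a d))
      (Eventually.of_forall fun N d ↦ by
        have hS : 0 ≤ (∑ m ∈ Ioc 0 (N / d), (m : ℝ)) / N ^ 2 := by positivity
        rw [norm_mul, Real.norm_eq_abs, Real.norm_of_nonneg hS]
        exact mul_le_mul (ha d) (sum_Ioc_div_div_sq_le N d) hS ((abs_nonneg _).trans (ha d)))
  simp only [hF] at hlim
  convert hlim using 2
  rw [← tsum_div_const]
  congr 1 with d
  ring

/-- As `N → ∞`, `∑_{n=1}^{N} φ(n) = (1 + o(1)) · (3/π²) · N²`; equivalently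
`(∑_{n=1}^{N} φ(n)) / N² → 3/π²`. -/
theorem totient_sum_asymptotic :
    Tendsto (fun N : ℕ => (∑ n ∈ Finset.Icc 1 N, (Nat.totient n : ℝ)) / (N : ℝ) ^ 2)
      atTop (nhds (3 / Real.pi ^ 2)) := by
  have h := tendsto_sum_mul_sum_Ioc_div_sq (a := fun d ↦ (μ d : ℝ)) (C := 1)
    fun d ↦ mod_cast abs_moebius_le_one
  rw [tsum_moebius_div_sq] at h
  convert h using 2 with N
  · rw [sum_Icc_totient_eq_sum_moebius_mul]
  · ring
end

section
/- There exists a constant C > 0 such that for all natural numbers N ≥ 3, the correlation sum ∑_{n=1}^{N-1} Υ(n) · Υ(N − n) is at most C · N · (log N) · (log log N). -/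
open scoped Classical
open Finset Real

/-- The master function `Υ`: `Υ(n) = log p` if `n = p²` for a prime `p` (note then
`p = √n`), `Υ(n) = log(p₁p₂)` if `n = p₁p₂` for distinct primes `p₁, p₂`, and
`Υ(n) = 0` otherwise. -/
noncomputable def Upsilon (n : ℕ) : ℝ :=
  if ∃ p : ℕ, p.Prime ∧ n = p ^ 2 then Real.log (Nat.sqrt n)
  else if ∃ p₁ p₂ : ℕ, p₁.Prime ∧ p₂.Prime ∧ p₁ ≠ p₂ ∧ n = p₁ * p₂ then Real.log n
  else 0

/-!
Since `Υ(N - n) ≤ log N`, the correlation sum is at most `log N · ∑_{n ≤ N} Υ(n)`.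
A nonzero `Υ(n)` is bounded by the sum of `log q` over the ordered factorisations `n = p q`
into primes, so Chebyshev's bound `θ(x) ≤ x log 4` gives
`∑_{n ≤ N} Υ(n) ≤ ∑_{p ≤ N} θ(N / p) ≤ log 4 · N ∑_{p ≤ N} 1/p`.
The same bound on the dyadic blocks `(2^k, 2^{k+1}]`, where `p log p ≥ 2^k (k + 1) log 2 / 2`,
gives `∑_{p ∈ (2^k, 2^{k+1}]} 1/p ≤ 8/(k + 1)`, hence `∑_{p ≤ x} 1/p = O(log log x)`.
-/

open Nat (primesLE mem_primesLE primesLE_mono)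
open Chebyshev

lemma succ_mul_log_two_le_two_mul_log {p k : ℕ} (hp : p.Prime) (hk : 2 ^ k < p) :
    (k + 1) * log 2 ≤ 2 * log p := by
  have h : (2 : ℝ) ^ (k + 1) ≤ (p : ℝ) ^ 2 := by
    rw [pow_succ, sq]
    exact_mod_cast Nat.mul_le_mul hk.le hp.two_le
  have := log_le_log (by positivity) h
  rw [log_pow, log_pow, Nat.cast_ofNat] at this
  exact_mod_cast this

lemma sum_one_div_primesLE_two_pow_sdiff_le (k : ℕ) :
    ∑ p ∈ primesLE (2 ^ (k + 1)) \ primesLE (2 ^ k), (1 / p : ℝ) ≤ 8 / (k + 1) := by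
  have hlog2 : 0 < log 2 := log_pos one_lt_two
  set c : ℝ := 2 ^ k * ((k + 1) * log 2 / 2) with hc
  have hc0 : 0 < c := by positivity
  calc ∑ p ∈ primesLE (2 ^ (k + 1)) \ primesLE (2 ^ k), (1 / p : ℝ)
      ≤ ∑ p ∈ primesLE (2 ^ (k + 1)) \ primesLE (2 ^ k), log p / c := by
        refine sum_le_sum fun p hp => ?_
        simp only [mem_sdiff, mem_primesLE, not_and] at hp
        obtain ⟨⟨-, hp⟩, hpk⟩ := hp
        have hkp : 2 ^ k < p := not_le.mp fun h => hpk h hp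
        have hp0 : (0 : ℝ) < p := by exact_mod_cast hp.pos
        rw [div_le_div_iff₀ hp0 hc0, one_mul, mul_comm (log p)]
        exact mul_le_mul (by exact_mod_cast hkp.le)
          (by linarith [succ_mul_log_two_le_two_mul_log hp hkp]) (by positivity) hp0.le
    _ ≤ θ (2 ^ (k + 1) : ℕ) / c := by
        rw [← sum_div, theta_eq_sum_primesLE_log]
        gcongr
        exact sdiff_subset
    _ ≤ log 4 * (2 ^ (k + 1) : ℕ) / c := by gcongr; exact theta_le_log4_mul_x (by positivity)
    _ = 8 / (k + 1) := by
        rw [show (4 : ℝ) = 2 ^ 2 by norm_num, log_pow, hc]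
        field_simp
        push_cast
        ring

lemma sum_one_div_primesLE_two_pow_le (K : ℕ) :
    ∑ p ∈ primesLE (2 ^ K), (1 / p : ℝ) ≤ 8 * harmonic K := by
  induction K with
  | zero => simp [show primesLE 1 = ∅ by decide]
  | succ K ih =>
    rw [← sum_sdiff (primesLE_mono (Nat.pow_le_pow_right two_pos (K.le_add_right 1))),
      harmonic_succ]
    push_cast
    have hblock := sum_one_div_primesLE_two_pow_sdiff_le K
    rw [div_eq_mul_inv] at hblock
    linarith

lemma inv_twelve_le_log_log {x : ℝ} (hx : 3 ≤ x) : 12⁻¹ ≤ log (log x) := by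
  have hlog : 1.0986 < log x :=
    lt_of_lt_of_le (by linarith [log_three_gt_d9]) (log_le_log (by norm_num) hx)
  have hinv : (log x)⁻¹ ≤ 1.0986⁻¹ := inv_anti₀ (by norm_num) hlog.le
  have := one_sub_inv_le_log_of_pos (by linarith : 0 < log x)
  norm_num at hinv ⊢
  linarith

lemma sum_one_div_primesLE_le {x : ℕ} (hx : 3 ≤ x) :
    ∑ p ∈ primesLE x, (1 / p : ℝ) ≤ 216 * log (log x) := by
  set K := Nat.log 2 x + 1
  have hx' : (3 : ℝ) ≤ x := by exact_mod_cast hx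
  have hlogx : 1 ≤ log x := by
    rw [le_log_iff_exp_le (by positivity)]
    linarith [exp_one_lt_d9]
  have hK : (K : ℝ) ≤ 3 * log x := by
    have h := Real.natLog_le_logb x 2
    rw [logb, Nat.cast_ofNat, le_div_iff₀ (log_pos one_lt_two)] at h
    push_cast [K]
    nlinarith [log_two_gt_d9]
  have hlogK : log K ≤ log 3 + log (log x) := by
    rw [← log_mul (by norm_num) (by positivity)]
    exact log_le_log (by positivity) hK
  calc ∑ p ∈ primesLE x, (1 / p : ℝ)
      ≤ ∑ p ∈ primesLE (2 ^ K), (1 / p : ℝ) :=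
        sum_le_sum_of_subset_of_nonneg (primesLE_mono (Nat.lt_pow_succ_log_self one_lt_two x).le)
          fun _ _ _ => by positivity
    _ ≤ 8 * (1 + log K) := by
        grw [sum_one_div_primesLE_two_pow_le K, harmonic_le_one_add_log K]
    _ ≤ 216 * log (log x) := by
        linarith [log_three_lt_d9, inv_twelve_le_log_log hx']

lemma upsilon_nonneg (n : ℕ) : 0 ≤ Upsilon n := by
  unfold Upsilon
  split_ifs <;> first | exact le_rfl | exact log_natCast_nonneg _

lemma upsilon_le_log (n : ℕ) : Upsilon n ≤ log n := by
  unfold Upsilon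
  split_ifs with hsq
  · obtain ⟨p, hp, rfl⟩ := hsq
    rw [Nat.sqrt_eq']
    exact log_le_log (by exact_mod_cast hp.pos) (by exact_mod_cast Nat.le_self_pow two_ne_zero p)
  · exact le_rfl
  · exact log_natCast_nonneg n

lemma upsilon_le_log_of_le {n N : ℕ} (h : n ≤ N) : Upsilon n ≤ log N := by
  refine (upsilon_le_log n).trans ?_
  rcases n.eq_zero_or_pos with rfl | hn
  · simpa using log_natCast_nonneg N
  · exact log_le_log (by exact_mod_cast hn) (by exact_mod_cast h)

def primePairsLE (N : ℕ) : Finset (ℕ × ℕ) :=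
  (primesLE N ×ˢ primesLE N).filter fun x => x.1 * x.2 ≤ N

lemma mem_primePairsLE {N : ℕ} {x : ℕ × ℕ} :
    x ∈ primePairsLE N ↔ x.1.Prime ∧ x.2.Prime ∧ x.1 * x.2 ≤ N := by
  obtain ⟨p, q⟩ := x
  simp only [primePairsLE, mem_filter, mem_product, mem_primesLE]
  constructor
  · tauto
  · rintro ⟨hp, hq, hpq⟩
    exact ⟨⟨⟨(Nat.le_mul_of_pos_right p hq.pos).trans hpq, hp⟩,
      (Nat.le_mul_of_pos_left q hp.pos).trans hpq, hq⟩, hpq⟩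

-- Each semiprime `n ≤ N` is counted by the pairs `(p, q)`, `(q, p)`, each `p²` by `(p, p)`.
lemma upsilon_le_sum_primePairsLE {n N : ℕ} (h : n ≤ N) :
    Upsilon n ≤ ∑ x ∈ primePairsLE N with x.1 * x.2 = n, log x.2 := by
  have hnonneg : ∀ x ∈ {x ∈ primePairsLE N | x.1 * x.2 = n}, 0 ≤ log x.2 :=
    fun x _ => log_natCast_nonneg _
  have hmem {p q : ℕ} (hp : p.Prime) (hq : q.Prime) (hn : n = p * q) :
      (p, q) ∈ {x ∈ primePairsLE N | x.1 * x.2 = n} :=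
    mem_filter.mpr ⟨mem_primePairsLE.mpr ⟨hp, hq, hn ▸ h⟩, hn.symm⟩
  unfold Upsilon
  split_ifs with hsq hsemi
  · obtain ⟨p, hp, rfl⟩ := hsq
    rw [Nat.sqrt_eq']
    exact single_le_sum hnonneg (hmem hp hp (sq p))
  · obtain ⟨p, q, hp, hq, hpq, rfl⟩ := hsemi
    have hsub : {(p, q), (q, p)} ⊆ {x ∈ primePairsLE N | x.1 * x.2 = p * q} := by
      simp only [insert_subset_iff, singleton_subset_iff]
      exact ⟨hmem hp hq rfl, hmem hq hp (mul_comm p q)⟩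
    refine le_of_eq_of_le ?_ (sum_le_sum_of_subset_of_nonneg hsub fun x hx _ => hnonneg x hx)
    rw [sum_pair (by simp [hpq]), Nat.cast_mul, log_mul (by exact_mod_cast hp.ne_zero)
      (by exact_mod_cast hq.ne_zero), add_comm]
  · exact sum_nonneg hnonneg

lemma sum_log_snd_primePairsLE_le (N : ℕ) :
    ∑ x ∈ primePairsLE N, log x.2 ≤ log 4 * N * ∑ p ∈ primesLE N, (1 / p : ℝ) := by
  rw [primePairsLE, sum_filter, sum_product, mul_sum]
  refine sum_le_sum fun p hp => ?_
  have hp0 : 0 < p := (mem_primesLE.mp hp).2.pos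
  rw [← sum_filter]
  calc ∑ q ∈ primesLE N with p * q ≤ N, log q
      ≤ θ (N / p : ℕ) := by
        rw [theta_eq_sum_primesLE_log]
        refine sum_le_sum_of_subset_of_nonneg (fun q hq => ?_) fun q _ _ => log_natCast_nonneg q
        rw [mem_filter, mem_primesLE] at hq
        exact mem_primesLE.mpr ⟨(Nat.le_div_iff_mul_le hp0).mpr (by linarith [hq.2]), hq.1.2⟩
    _ ≤ log 4 * (N / p : ℕ) := theta_le_log4_mul_x (Nat.cast_nonneg _)
    _ ≤ log 4 * N * (1 / p) := by
        rw [mul_assoc, mul_one_div]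
        exact mul_le_mul_of_nonneg_left Nat.cast_div_le (log_nonneg (by norm_num))

lemma sum_upsilon_le (N : ℕ) :
    ∑ n ∈ Icc 1 N, Upsilon n ≤ log 4 * N * ∑ p ∈ primesLE N, (1 / p : ℝ) := by
  have hmaps : ∀ x ∈ primePairsLE N, x.1 * x.2 ∈ Icc 1 N := fun x hx => by
    obtain ⟨hp, hq, hpq⟩ := mem_primePairsLE.mp hx
    exact mem_Icc.mpr ⟨Nat.mul_pos hp.pos hq.pos, hpq⟩
  calc ∑ n ∈ Icc 1 N, Upsilon n
      ≤ ∑ n ∈ Icc 1 N, ∑ x ∈ primePairsLE N with x.1 * x.2 = n, log x.2 :=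
        sum_le_sum fun n hn => upsilon_le_sum_primePairsLE (mem_Icc.mp hn).2
    _ = ∑ x ∈ primePairsLE N, log x.2 := sum_fiberwise_of_maps_to hmaps _
    _ ≤ _ := sum_log_snd_primePairsLE_le N

/-- There is a constant `C > 0` such that for every `N ≥ 3`,
`∑_{n=1}^{N-1} Υ(n) · Υ(N − n) ≤ C · N · log N · log log N`. -/
theorem upsilon_correlation_upper_bound :
    ∃ C : ℝ, 0 < C ∧ ∀ N : ℕ, 3 ≤ N →
      ∑ n ∈ Finset.Icc 1 (N - 1), Upsilon n * Upsilon (N - n) ≤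
        C * N * Real.log N * Real.log (Real.log N) := by
  refine ⟨log 4 * 216, by positivity, fun N hN => ?_⟩
  calc ∑ n ∈ Icc 1 (N - 1), Upsilon n * Upsilon (N - n)
      ≤ ∑ n ∈ Icc 1 (N - 1), Upsilon n * log N :=
        sum_le_sum fun n _ => mul_le_mul_of_nonneg_left
          (upsilon_le_log_of_le (N.sub_le n)) (upsilon_nonneg n)
    _ ≤ (∑ n ∈ Icc 1 N, Upsilon n) * log N := by
        rw [sum_mul]
        exact sum_le_sum_of_subset_of_nonneg (Icc_subset_Icc_right (N.sub_le 1))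
          fun n _ _ => mul_nonneg (upsilon_nonneg n) (log_natCast_nonneg N)
    _ ≤ (log 4 * N * (216 * log (log N))) * log N := by
        gcongr
        exact (sum_upsilon_le N).trans (by gcongr; exact sum_one_div_primesLE_le hN)
    _ = log 4 * 216 * N * log N * log (log N) := by ring
end

section
/- For every even natural number N > 6, if ∑_{1 ≤ n ≤ N−1, gcd(n, N−n) > 1} Υ(n) · Υ(N − n) > 0, then ∑_{p prime, p ∣ N} ∑_{1 ≤ n ≤ N/p − 1} Λ₀(n) · Λ₀(N/p − n) > 0; that is, some prime p dividing N yields an even number N/p expressible as a sum of two primes. -/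
open scoped Classical
open Finset Real

/-- The truncated von Mangoldt function: `Λ₀(n) = log n` if `n` is prime, else `0`. -/
noncomputable def Lambda0 (n : ℕ) : ℝ := if n.Prime then Real.log n else 0

/-!
A positive term `Υ(n) Υ(N - n)` with `gcd(n, N - n) > 1` forces `n = q c` and `N - n = q d`
for primes `q, c, d`: both are products of two primes sharing the prime factor `q`.
Then `N / q = c + d` is a sum of two primes, so the `q`-th inner sum has the positive
term `Λ₀(c) Λ₀(d)`.
-/

lemma Lambda0_nonneg (n : ℕ) : 0 ≤ Lambda0 n := by
  unfold Lambda0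
  split_ifs with hn
  · exact Real.log_nonneg (mod_cast hn.one_le)
  · exact le_rfl

lemma Lambda0_pos {p : ℕ} (hp : p.Prime) : 0 < Lambda0 p := by
  rw [Lambda0, if_pos hp]
  exact Real.log_pos (mod_cast hp.one_lt)

lemma exists_prime_mul_eq_of_Upsilon_ne_zero {n : ℕ} (h : Upsilon n ≠ 0) :
    ∃ a b : ℕ, a.Prime ∧ b.Prime ∧ n = a * b := by
  unfold Upsilon at h
  split_ifs at h with hsq hsemi
  · obtain ⟨p, hp, rfl⟩ := hsq
    exact ⟨p, p, hp, hp, sq p⟩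
  · obtain ⟨p₁, p₂, hp₁, hp₂, -, rfl⟩ := hsemi
    exact ⟨p₁, p₂, hp₁, hp₂, rfl⟩
  · exact absurd rfl h

lemma Nat.Prime.exists_prime_eq_mul_of_dvd_mul {q a b : ℕ} (hq : q.Prime) (ha : a.Prime)
    (hb : b.Prime) (hdvd : q ∣ a * b) : ∃ c, c.Prime ∧ a * b = q * c := by
  rcases hq.dvd_mul.mp hdvd with hqa | hqb
  · exact ⟨b, hb, by rw [(Nat.prime_dvd_prime_iff_eq hq ha).mp hqa]⟩
  · exact ⟨a, ha, by rw [(Nat.prime_dvd_prime_iff_eq hq hb).mp hqb, mul_comm]⟩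

lemma exists_prime_eq_mul_of_Upsilon_ne_zero_of_dvd {n q : ℕ} (h : Upsilon n ≠ 0)
    (hq : q.Prime) (hdvd : q ∣ n) : ∃ c, c.Prime ∧ n = q * c := by
  obtain ⟨a, b, ha, hb, rfl⟩ := exists_prime_mul_eq_of_Upsilon_ne_zero h
  exact hq.exists_prime_eq_mul_of_dvd_mul ha hb hdvd

lemma sum_Lambda0_mul_Lambda0_nonneg (M : ℕ) :
    0 ≤ ∑ n ∈ Icc 1 (M - 1), Lambda0 n * Lambda0 (M - n) :=
  sum_nonneg fun n _ => mul_nonneg (Lambda0_nonneg n) (Lambda0_nonneg _)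

lemma sum_Lambda0_mul_Lambda0_pos_of_eq_add {M c d : ℕ} (hc : c.Prime) (hd : d.Prime)
    (hM : M = c + d) : 0 < ∑ n ∈ Icc 1 (M - 1), Lambda0 n * Lambda0 (M - n) := by
  have hc2 := hc.two_le
  have hd2 := hd.two_le
  refine sum_pos' (fun n _ => mul_nonneg (Lambda0_nonneg n) (Lambda0_nonneg _))
    ⟨c, mem_Icc.mpr ⟨by omega, by omega⟩, ?_⟩
  rw [show M - c = d by omega]
  exact mul_pos (Lambda0_pos hc) (Lambda0_pos hd)

lemma exists_prime_eq_mul_of_Upsilon_mul_Upsilon_pos {N n : ℕ} (hn : n ≤ N)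
    (hgcd : 1 < Nat.gcd n (N - n)) (hpos : 0 < Upsilon n * Upsilon (N - n)) :
    ∃ q c d, q.Prime ∧ c.Prime ∧ d.Prime ∧ N = q * (c + d) := by
  obtain ⟨q, hq, hqgcd⟩ := Nat.exists_prime_and_dvd hgcd.ne'
  obtain ⟨c, hc, hnc⟩ := exists_prime_eq_mul_of_Upsilon_ne_zero_of_dvd
    (left_ne_zero_of_mul hpos.ne') hq (hqgcd.trans (Nat.gcd_dvd_left _ _))
  obtain ⟨d, hd, hnd⟩ := exists_prime_eq_mul_of_Upsilon_ne_zero_of_dvd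
    (right_ne_zero_of_mul hpos.ne') hq (hqgcd.trans (Nat.gcd_dvd_right _ _))
  exact ⟨q, c, d, hq, hc, hd, by rw [mul_add, ← hnc, ← hnd]; omega⟩

theorem lambda0_correlation_pos_of_upsilon_noncoprime_pos_general (N : ℕ)
    (h : 0 < ∑ n ∈ (Finset.Icc 1 (N - 1)).filter (fun n => 1 < Nat.gcd n (N - n)),
        Upsilon n * Upsilon (N - n)) :
    0 < ∑ p ∈ N.primeFactors, ∑ n ∈ Finset.Icc 1 (N / p - 1),
        Lambda0 n * Lambda0 (N / p - n) := by
  obtain ⟨n, hn, hpos⟩ := exists_lt_of_sum_lt (h.trans_eq' sum_const_zero.symm)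
  rw [mem_filter, mem_Icc] at hn
  obtain ⟨q, c, d, hq, hc, hd, hN⟩ :=
    exists_prime_eq_mul_of_Upsilon_mul_Upsilon_pos (by omega) hn.2 hpos
  have hN0 : N ≠ 0 := by
    rw [hN]; exact mul_ne_zero hq.ne_zero (by have := hc.two_le; omega)
  refine sum_pos' (fun p _ => sum_Lambda0_mul_Lambda0_nonneg _) ⟨q, ?_, ?_⟩
  · exact (Nat.mem_primeFactors_of_ne_zero hN0).mpr ⟨hq, hN ▸ dvd_mul_right _ _⟩
  · exact sum_Lambda0_mul_Lambda0_pos_of_eq_add hc hd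
      (by rw [hN, Nat.mul_div_cancel_left _ hq.pos])

/-- For every even `N > 6`, if `∑_{1 ≤ n ≤ N−1, gcd(n, N−n) > 1} Υ(n)·Υ(N−n) > 0`,
then `∑_{p ∣ N prime} ∑_{1 ≤ n ≤ N/p−1} Λ₀(n)·Λ₀(N/p−n) > 0`. -/
theorem lambda0_correlation_pos_of_upsilon_noncoprime_pos (N : ℕ) (hN : Even N)
    (hN6 : 6 < N)
    (h : 0 < ∑ n ∈ (Finset.Icc 1 (N - 1)).filter (fun n => 1 < Nat.gcd n (N - n)),
        Upsilon n * Upsilon (N - n)) :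
    0 < ∑ p ∈ N.primeFactors, ∑ n ∈ Finset.Icc 1 (N / p - 1),
        Lambda0 n * Lambda0 (N / p - n) :=
  lambda0_correlation_pos_of_upsilon_noncoprime_pos_general N h
end
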